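/- arXiv:1008.3462 — 5 statements merged into one kernel-verified Lean document; each statement's English description precedes it below -/
import Mathlib

section
/- There is no continuously differentiable function P on the unit circle 𝕋 such that P(z)² − 2zP(z) − 1 = 0 for all z ∈ 𝕋. -/
/-!
Completing the square, `(P z - z)² = z² + 1` on the circle. Along `θ ↦ exp (θ i)` the right-hand
side has a simple zero at `θ = π/2` (i.e. `z = i`), with derivative `-2i`. But the square of a
function that is differentiable at one of its zeros has derivative `0` there, so
`θ ↦ P (exp (θ i)) - exp (θ i)` cannot be differentiable at `π/2`.
-/

open Complex Filter Real Topology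

theorem not_differentiableAt_of_sq_eventuallyEq {𝕜 𝔸 : Type*} [NontriviallyNormedField 𝕜]
    [NormedCommRing 𝔸] [NormedAlgebra 𝕜 𝔸] {f g : 𝕜 → 𝔸} {g' : 𝔸} {x : 𝕜}
    (hfg : (fun t => f t ^ 2) =ᶠ[𝓝 x] g) (hfx : f x = 0) (hg : HasDerivAt g g' x)
    (hg' : g' ≠ 0) : ¬ DifferentiableAt 𝕜 f x := by
  intro hf
  have hg_zero : HasDerivAt g 0 x := by
    simpa [hfx] using (hf.hasDerivAt.fun_pow 2).congr_of_eventuallyEq hfg.symm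
  exact hg' (hg.unique hg_zero)

theorem hasDerivAt_exp_ofReal_mul_I (θ : ℝ) :
    HasDerivAt (fun t : ℝ => exp (t * I)) (exp (θ * I) * I) θ := by
  simpa using ((hasDerivAt_id θ).ofReal_comp.mul_const I).cexp

/-- There is no `P ∈ C¹(𝕋)` such that `P(z)² − 2zP(z) − 1 = 0` for all `z ∈ 𝕋`. -/
theorem no_C1_solution_riccati :
    ¬ ∃ P : ℂ → ℂ,
      ContDiff ℝ 1 (fun θ : ℝ => P (Complex.exp (θ * Complex.I))) ∧
      ∀ z : ℂ, ‖z‖ = 1 → (P z) ^ 2 - 2 * z * P z - 1 = 0 := by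
  rintro ⟨P, hP, hP_eq⟩
  set e : ℝ → ℂ := fun θ => exp (θ * I)
  set f : ℝ → ℂ := fun θ => P (e θ) - e θ
  have hsq : ∀ θ, f θ ^ 2 = e θ ^ 2 + 1 := fun θ => by
    linear_combination hP_eq _ (norm_exp_ofReal_mul_I θ)
  have he : e (π / 2) = I := by simp [e, exp_pi_div_two_mul_I]
  have hf_zero : f (π / 2) = 0 := by
    rw [← sq_eq_zero_iff, hsq, he, I_sq, neg_add_cancel]
  have hg : HasDerivAt (fun θ => e θ ^ 2 + 1) (-2 * I) (π / 2) := by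
    simpa using ((hasDerivAt_exp_ofReal_mul_I (π / 2)).fun_pow 2).add_const 1
  have hf : DifferentiableAt ℝ f (π / 2) :=
    (hP.differentiable one_ne_zero).differentiableAt.sub
      (hasDerivAt_exp_ofReal_mul_I _).differentiableAt
  refine not_differentiableAt_of_sq_eventuallyEq (Eventually.of_forall hsq) hf_zero hg (by simp) hf
end

section
/- The function g on the unit circle defined by g(e^{iθ}) = √2·√(cos θ)·e^{iθ/2} when cos θ ≥ 0 and g(e^{iθ}) = √2·√(−cos θ)·e^{i(θ+π)/2} when cos θ < 0 satisfies g(z)² = z² + 1 for all z ∈ 𝕋, and g is continuous on 𝕋 but not differentiable at θ = π/2. -/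
/-!
Squaring either branch gives `2 cos θ · e^{iθ}`, which equals `e^{2iθ} + 1`. Both branches vanish
where `cos θ = 0`, so the piecewise definition is continuous. Since `|g(e^{iθ})| = √2 √|cos θ|`,
near `θ = π/2` the function grows like `√|θ - π/2|`, which no derivative can accommodate.
-/

open Complex Filter Topology
open scoped Real

theorem not_differentiableAt_of_mul_sqrt_le_norm_sub {E : Type*} [NormedAddCommGroup E]
    [NormedSpace ℝ E] {f : ℝ → E} {a c : ℝ} (hc : 0 < c)
    (h : ∀ᶠ t in 𝓝[>] 0, c * √t ≤ ‖f (a + t) - f a‖) : ¬ DifferentiableAt ℝ f a := by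
  intro hf
  obtain ⟨C, hC⟩ := Asymptotics.isBigO_iff.mp hf.isBigO_sub
  have hshift : Tendsto (fun t : ℝ => a + t) (𝓝[>] 0) (𝓝 a) := by
    simpa using ((continuous_const_add a).tendsto 0).mono_left nhdsWithin_le_nhds
  have hlip : ∀ᶠ t in 𝓝[>] 0, ‖f (a + t) - f a‖ ≤ C * t := by
    filter_upwards [hshift.eventually hC, self_mem_nhdsWithin] with t ht (htpos : 0 < t)
    simpa [abs_of_pos htpos] using ht
  have hsmall : ∀ᶠ t in 𝓝[>] 0, C * √t < c := by
    have : Tendsto (fun t : ℝ => C * √t) (𝓝 0) (𝓝 0) := by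
      simpa using (Real.continuous_sqrt.tendsto 0).const_mul C
    exact (this.eventually (gt_mem_nhds hc)).filter_mono nhdsWithin_le_nhds
  obtain ⟨t, hlow, hup, hlt, htpos⟩ :=
    (h.and (hlip.and (hsmall.and self_mem_nhdsWithin))).exists
  have hsqrt : 0 < √t := Real.sqrt_pos.mpr htpos
  have : c * √t < c * √t := calc
    c * √t ≤ C * t := hlow.trans hup
    _ = C * √t * √t := by rw [mul_assoc, Real.mul_self_sqrt htpos.le]
    _ < c * √t := mul_lt_mul_of_pos_right hlt hsqrt
  exact lt_irrefl _ this

theorem exp_mul_I_sq_add_one (θ : ℝ) :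
    exp (θ * I) ^ 2 + 1 = ((2 * Real.cos θ : ℝ) : ℂ) * exp (θ * I) := by
  have hinv : exp (-θ * I) * exp (θ * I) = 1 := by rw [← Complex.exp_add]; simp
  push_cast
  rw [two_cos, add_mul, hinv]
  ring

theorem exp_half_mul_I_sq (θ : ℝ) : exp ((θ / 2 : ℝ) * I) ^ 2 = exp (θ * I) := by
  rw [← exp_nat_mul]
  push_cast
  ring_nf

theorem ofReal_sqrt_two_mul_sqrt_sq {x : ℝ} (hx : 0 ≤ x) :
    ((√2 * √x : ℝ) : ℂ) ^ 2 = ((2 * x : ℝ) : ℂ) := by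
  rw [← ofReal_pow, mul_pow, Real.sq_sqrt zero_le_two, Real.sq_sqrt hx]

/-- The function `θ ↦ g(e^{iθ})`. -/
noncomputable def sqrtSqAddOneOnCircle (θ : ℝ) : ℂ :=
  if 0 ≤ Real.cos θ then
    (√2 * √(Real.cos θ) : ℝ) * exp ((θ / 2 : ℝ) * I)
  else
    (√2 * √(-Real.cos θ) : ℝ) * exp (((θ + π) / 2 : ℝ) * I)

theorem sqrtSqAddOneOnCircle_sq (θ : ℝ) :
    sqrtSqAddOneOnCircle θ ^ 2 = exp (θ * I) ^ 2 + 1 := by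
  rw [exp_mul_I_sq_add_one, sqrtSqAddOneOnCircle]
  split_ifs with h
  · rw [mul_pow, ofReal_sqrt_two_mul_sqrt_sq h, exp_half_mul_I_sq]
  · rw [mul_pow, ofReal_sqrt_two_mul_sqrt_sq (by linarith), exp_half_mul_I_sq, ofReal_add,
      add_mul, exp_add, exp_pi_mul_I]
    push_cast
    ring

theorem norm_sqrtSqAddOneOnCircle (θ : ℝ) :
    ‖sqrtSqAddOneOnCircle θ‖ = √2 * √|Real.cos θ| := by
  rw [sqrtSqAddOneOnCircle]
  split_ifs with h
  all_goals simp only [norm_mul, norm_real, norm_exp_ofReal_mul_I, mul_one, Real.norm_eq_abs,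
    abs_of_nonneg (Real.sqrt_nonneg _)]
  · rw [abs_of_nonneg h]
  · rw [abs_of_neg (not_le.mp h)]

theorem continuous_sqrtSqAddOneOnCircle : Continuous sqrtSqAddOneOnCircle := by
  refine Continuous.if (fun θ hθ => ?_) (by fun_prop) (by fun_prop)
  have hcos : 0 = Real.cos θ := frontier_le_subset_eq continuous_const Real.continuous_cos hθ
  simp [← hcos]

theorem mul_sqrt_le_norm_sqrtSqAddOneOnCircle_sub :
    ∀ᶠ t in 𝓝[>] 0, √2 * √(2 / π) * √t ≤
      ‖sqrtSqAddOneOnCircle (π / 2 + t) - sqrtSqAddOneOnCircle (π / 2)‖ := by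
  have hnear : ∀ᶠ t in 𝓝[>] (0 : ℝ), t < π / 2 :=
    (gt_mem_nhds (half_pos Real.pi_pos)).filter_mono nhdsWithin_le_nhds
  filter_upwards [hnear, self_mem_nhdsWithin] with t ht (htpos : 0 < t)
  have hzero : sqrtSqAddOneOnCircle (π / 2) = 0 := by
    rw [← norm_eq_zero, norm_sqrtSqAddOneOnCircle, Real.cos_pi_div_two]
    simp
  have hjordan : 2 / π * t ≤ |Real.cos (π / 2 + t)| := by
    rw [add_comm, Real.cos_add_pi_div_two, abs_neg]
    exact (Real.mul_le_sin htpos.le ht.le).trans (le_abs_self _)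
  rw [hzero, sub_zero, norm_sqrtSqAddOneOnCircle, mul_assoc,
    ← Real.sqrt_mul (by positivity)]
  gcongr

/-- The function `g(e^{iθ}) = √2 √(cos θ) e^{iθ/2}` for `cos θ ≥ 0`,
`g(e^{iθ}) = √2 √(−cos θ) e^{i(θ+π)/2}` for `cos θ < 0`, satisfies
`g(z)² = z² + 1` on the circle, is continuous (in the angular parameter),
but is not differentiable at `θ = π/2`. -/
theorem sqrt_of_zsq_add_one_continuous_not_differentiable :
    let G : ℝ → ℂ := fun θ =>
      if 0 ≤ Real.cos θ then
        (Real.sqrt 2 * Real.sqrt (Real.cos θ) : ℝ) * Complex.exp ((θ / 2 : ℝ) * Complex.I)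
      else
        (Real.sqrt 2 * Real.sqrt (-Real.cos θ) : ℝ) *
          Complex.exp (((θ + Real.pi) / 2 : ℝ) * Complex.I)
    (∀ θ : ℝ, (G θ) ^ 2 = (Complex.exp (θ * Complex.I)) ^ 2 + 1) ∧
    Continuous G ∧
    ¬ DifferentiableAt ℝ G (Real.pi / 2) := by
  show (∀ θ : ℝ, sqrtSqAddOneOnCircle θ ^ 2 = exp (θ * I) ^ 2 + 1) ∧
    Continuous sqrtSqAddOneOnCircle ∧ ¬ DifferentiableAt ℝ sqrtSqAddOneOnCircle (π / 2)
  exact ⟨sqrtSqAddOneOnCircle_sq, continuous_sqrtSqAddOneOnCircle,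
    not_differentiableAt_of_mul_sqrt_le_norm_sub (by positivity)
      mul_sqrt_le_norm_sqrtSqAddOneOnCircle_sub⟩
end

section
/- Let R be a commutative unital complex Banach algebra and A ∈ R^{n×n}. Then A is invertible in the matrix algebra R^{n×n} if and only if the multiplication operator M_A : Rⁿ → Rⁿ, v ↦ Av, is invertible in the algebra of bounded linear operators on Rⁿ. -/
/-- Let `R` be a commutative unital complex Banach algebra and `A ∈ R^{n×n}`.
Then `A` is invertible in the matrix algebra `R^{n×n}` iff the multiplication
map `M_A : v ↦ Av` is invertible in the algebra of bounded linear operators on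
`Rⁿ` (with the max norm, which is the `Pi` norm). -/
theorem matrix_isUnit_iff_mulVec_isUnit
    {R : Type*} [NormedCommRing R] [NormedAlgebra ℂ R] [CompleteSpace R]
    {n : ℕ} (A : Matrix (Fin n) (Fin n) R) :
    IsUnit A ↔
      ∃ T : (Fin n → R) →L[ℂ] (Fin n → R),
        (∀ v : Fin n → R, T (A.mulVec v) = v) ∧
        (∀ v : Fin n → R, A.mulVec (T v) = v) := by
  constructor
  · rintro ⟨u, rfl⟩
    set B : Matrix (Fin n) (Fin n) R := ↑u⁻¹ with hB
    have hAB : (u : Matrix (Fin n) (Fin n) R) * B = 1 := u.mul_inv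
    have hBA : B * (u : Matrix (Fin n) (Fin n) R) = 1 := u.inv_mul
    have hlin : IsLinearMap ℂ (fun v : Fin n → R => B.mulVec v) := by
      constructor
      · intro v w; exact B.mulVec_add v w
      · intro c v
        ext i
        simp [Matrix.mulVec, dotProduct, Finset.smul_sum, mul_smul_comm]
    have hcont : Continuous (fun v : Fin n → R => B.mulVec v) := by
      apply continuous_pi
      intro i
      simp only [Matrix.mulVec, dotProduct]
      exact continuous_finset_sum _ fun j _ =>
        (continuous_const.mul (continuous_apply j))
    refine ⟨⟨hlin.mk' _, hcont⟩, ?_, ?_⟩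
    · intro v
      show B.mulVec ((u : Matrix (Fin n) (Fin n) R).mulVec v) = v
      rw [Matrix.mulVec_mulVec, hBA, Matrix.one_mulVec]
    · intro v
      show (u : Matrix (Fin n) (Fin n) R).mulVec (B.mulVec v) = v
      rw [Matrix.mulVec_mulVec, hAB, Matrix.one_mulVec]
  · rintro ⟨T, hTA, hAT⟩
    have hbij : Function.Bijective (Matrix.toLinAlgEquiv' A) := by
      have : ⇑(Matrix.toLinAlgEquiv' A) = A.mulVec := by
        ext v; simp [Matrix.toLinAlgEquiv'_apply]
      rw [this]
      exact Function.bijective_iff_has_inverse.2 ⟨T, hTA, hAT⟩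
    have := (Module.End.isUnit_iff _).2 hbij
    have h2 := this.map (Matrix.toLinAlgEquiv' (R := R) (n := Fin n)).symm
    simpa using h2
end

section
/- Let R be a commutative unital complex semisimple Banach algebra and A ∈ R^{n×n}. Then λ ∈ ℂ belongs to the spectrum of A as an element of the Banach algebra R^{n×n} if and only if λ is an eigenvalue of the complex matrix Â(φ) for some character φ in the maximal ideal space M(R). -/
/-- Let `R` be a commutative unital complex semisimple Banach algebra and
`A ∈ R^{n×n}`. Then `λ` belongs to the spectrum of `A` in `R^{n×n}` iff `λ` is
an eigenvalue of the complex matrix `Â(φ)` (entrywise Gelfand transform) for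
some character `φ` of `R`. Semisimplicity is expressed by the injectivity of
the Gelfand transform. -/
theorem spectrum_matrix_eq_pointwise_eigenvalues
    {R : Type*} [NormedCommRing R] [NormedAlgebra ℂ R] [CompleteSpace R]
    (hss : ∀ x : R, (∀ φ : R →ₐ[ℂ] ℂ, φ x = 0) → x = 0)
    {n : ℕ} (A : Matrix (Fin n) (Fin n) R) (lam : ℂ) :
    lam ∈ spectrum ℂ A ↔
      ∃ φ : R →ₐ[ℂ] ℂ, Matrix.det (lam • (1 : Matrix (Fin n) (Fin n) ℂ) - A.map φ) = 0 := by
  have hmap : ∀ φ : R →ₐ[ℂ] ℂ,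
      (algebraMap ℂ (Matrix (Fin n) (Fin n) R) lam - A).map φ
        = lam • (1 : Matrix (Fin n) (Fin n) ℂ) - A.map φ := by
    intro φ
    ext i j
    simp [Matrix.map_apply, Matrix.sub_apply, Matrix.algebraMap_matrix_apply,
      Matrix.smul_apply, Matrix.one_apply, apply_ite φ]
  rw [spectrum.mem_iff, Matrix.isUnit_iff_isUnit_det]
  constructor
  · intro h
    obtain ⟨f, hf⟩ := WeakDual.CharacterSpace.exists_apply_eq_zero h
    refine ⟨WeakDual.CharacterSpace.equivAlgHom f, ?_⟩
    have := (WeakDual.CharacterSpace.equivAlgHom f).map_det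
      (algebraMap ℂ (Matrix (Fin n) (Fin n) R) lam - A)
    rw [AlgHom.mapMatrix_apply, hmap] at this
    rw [← this]
    exact hf
  · rintro ⟨φ, hφ⟩ h
    have h2 : IsUnit (φ ((algebraMap ℂ (Matrix (Fin n) (Fin n) R) lam - A).det)) :=
      h.map φ
    rw [φ.map_det, AlgHom.mapMatrix_apply, hmap, hφ] at h2
    exact (by simpa using h2 : False)
end

section
/- Let R be a commutative unital complex semisimple Banach algebra and A ∈ R^{n×n}. Then there exist constants C > 0 and ε > 0 with ‖e^{tA}‖ ≤ C e^{−εt} for all t ≥ 0 if and only if sup{Re λ : λ is an eigenvalue of Â(φ) for some φ ∈ M(R)} < 0. -/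
/-!
Both conditions are statements about the spectrum of `A` in the Banach algebra `Mₙ(R)`.
By Gelfand theory, `z ∈ σ(A)` iff `det (z - A)` is not invertible in `R`, iff some character `φ`
kills it, i.e. iff `z` is an eigenvalue of some `Â(φ)`.

If `‖e^{tA}‖ ≤ C e^{-εt}`, then `e^{tz} ∈ σ(e^{tA})` gives `e^{t Re z} ≤ C ‖1‖ e^{-εt}` for all
`t ≥ 0`, so `Re z ≤ -ε`. Conversely, characters commute with `exp` and `σ(e^B) = e^{σ(B)}` for
complex matrices (an eigenvector of `B` inside an eigenspace of `e^B`), so `σ(e^A)` lies in the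
disc of radius `e^{-δ}`. Gelfand's spectral radius formula then gives `‖e^{mA}‖ ≤ K e^{-δm/2}`
for `m ∈ ℕ`, and `e^{tA} = e^{(t - ⌊t⌋)A} e^{⌊t⌋A}` extends this to real `t ≥ 0`.
-/

attribute [local instance] Matrix.linftyOpNormedRing Matrix.linftyOpNormedAlgebra

open NormedSpace Filter Module.End

/-- The `L∞` operator norm induces the product uniformity, but not reducibly, so instance
search does not see on its own that the normed algebra of matrices is complete. -/
instance Matrix.linftyOp_completeSpace {ι R : Type*} [Fintype ι] [DecidableEq ι] [NormedRing R]
    [CompleteSpace R] :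
    @CompleteSpace (Matrix ι ι R) (inferInstance : NormedRing (Matrix ι ι R)).toUniformSpace :=
  inferInstanceAs (CompleteSpace (Matrix ι ι R))

theorem Real.nonpos_of_forall_exp_mul_le {c D : ℝ} (h : ∀ t : ℝ, 0 < t → exp (t * c) ≤ D) :
    c ≤ 0 := by
  by_contra! hc
  have hD := h ((|D| + 1) / c) (by positivity)
  rw [div_mul_cancel₀ _ hc.ne'] at hD
  linarith [add_one_le_exp (|D| + 1), le_abs_self D]

theorem spectrum.spectralRadius_le_ofReal_of_forall_norm_le {𝕜 A : Type*} [NormedField 𝕜]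
    [Ring A] [Algebra 𝕜 A] {a : A} {r : ℝ} (h : ∀ z ∈ spectrum 𝕜 a, ‖z‖ ≤ r) :
    spectralRadius 𝕜 a ≤ ENNReal.ofReal r :=
  iSup₂_le fun z hz => by
    rw [← enorm_eq_nnnorm, ← ofReal_norm]
    exact ENNReal.ofReal_le_ofReal (h z hz)

namespace spectrum

variable {𝔸 : Type*} [NormedRing 𝔸] [NormedAlgebra ℂ 𝔸] [CompleteSpace 𝔸]

theorem re_le_of_norm_exp_smul_le {a : 𝔸} {C ε : ℝ}
    (h : ∀ t : ℝ, 0 ≤ t → ‖exp (t • a)‖ ≤ C * Real.exp (-ε * t)) {z : ℂ}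
    (hz : z ∈ spectrum ℂ a) : z.re ≤ -ε := by
  suffices z.re + ε ≤ 0 by linarith
  refine Real.nonpos_of_forall_exp_mul_le (D := C * ‖(1 : 𝔸)‖) fun t ht => ?_
  have hsmul : (t : ℂ) * z ∈ spectrum ℂ ((t : ℂ) • a) :=
    (smul_mem_smul_iff (r := Units.mk0 (t : ℂ) (by exact_mod_cast ht.ne'))).2 hz
  have hexp : Complex.exp (t * z) ∈ spectrum ℂ (exp (t • a)) := by
    rw [← Complex.coe_smul, Complex.exp_eq_exp_ℂ]
    exact exp_mem_exp _ hsmul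
  calc Real.exp (t * (z.re + ε)) = ‖Complex.exp (t * z)‖ * Real.exp (ε * t) := by
        rw [Complex.norm_exp, ← Real.exp_add]
        simp only [Complex.re_ofReal_mul]
        ring_nf
    _ ≤ ‖exp (t • a)‖ * ‖(1 : 𝔸)‖ * Real.exp (ε * t) := by
        gcongr
        exact norm_le_norm_mul_of_mem hexp
    _ ≤ C * Real.exp (-ε * t) * ‖(1 : 𝔸)‖ * Real.exp (ε * t) := by
        gcongr
        exact h t ht.le
    _ = C * ‖(1 : 𝔸)‖ * Real.exp (-ε * t + ε * t) := by rw [Real.exp_add]; ring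
    _ = C * ‖(1 : 𝔸)‖ := by rw [neg_mul, neg_add_cancel, Real.exp_zero, mul_one]

theorem exists_norm_pow_le_of_spectralRadius_lt {a : 𝔸} {q : ℝ}
    (h : spectralRadius ℂ a < ENNReal.ofReal q) : ∃ K, ∀ m : ℕ, ‖a ^ m‖ ≤ K * q ^ m := by
  have hq : 0 < q := ENNReal.ofReal_pos.1 (pos_of_gt h)
  have hev : ∀ᶠ m : ℕ in atTop, ‖a ^ m‖ / q ^ m ≤ 1 := by
    filter_upwards [(pow_norm_pow_one_div_tendsto_nhds_spectralRadius a).eventually_lt_const h,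
      eventually_gt_atTop 0] with m hm hm0
    rw [ENNReal.ofReal_lt_ofReal_iff hq, one_div] at hm
    rw [div_le_one (by positivity), ← Real.rpow_inv_natCast_pow (norm_nonneg _) hm0.ne']
    exact pow_le_pow_left₀ (by positivity) hm.le m
  obtain ⟨K, hK⟩ := (isBoundedUnder_of_eventually_le hev).bddAbove_range
  exact ⟨K, fun m => (div_le_iff₀ (by positivity)).1 (hK ⟨m, rfl⟩)⟩

theorem exists_norm_exp_smul_le_of_spectralRadius_exp_lt {a : 𝔸} {ε : ℝ} (hε : 0 ≤ ε)
    (h : spectralRadius ℂ (exp a) < ENNReal.ofReal (Real.exp (-ε))) :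
    ∃ C > 0, ∀ t : ℝ, 0 ≤ t → ‖exp (t • a)‖ ≤ C * Real.exp (-ε * t) := by
  let _ : NormedAlgebra ℚ 𝔸 := .restrictScalars ℚ ℂ 𝔸
  obtain ⟨K, hK⟩ := exists_norm_pow_le_of_spectralRadius_lt h
  obtain ⟨M, hM⟩ := (isCompact_Icc (a := (0 : ℝ)) (b := 1)).exists_bound_of_continuousOn
    (f := fun s : ℝ => exp (s • a)) (by fun_prop)
  have hM0 : 0 ≤ M := (norm_nonneg _).trans (hM 0 ⟨le_rfl, zero_le_one⟩)
  have hK0 : 0 ≤ K := by simpa using (norm_nonneg _).trans (hK 0)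
  refine ⟨(M * K + 1) * Real.exp ε, by positivity, fun t ht => ?_⟩
  set m := ⌊t⌋₊
  have hm : (m : ℝ) ≤ t := Nat.floor_le ht
  have hm' : t < m + 1 := Nat.lt_floor_add_one t
  have hsplit : exp (t • a) = exp ((t - m) • a) * exp a ^ m := by
    rw [← exp_nsmul, ← exp_add_of_commute (((Commute.refl a).smul_left _).smul_right _),
      ← Nat.cast_smul_eq_nsmul ℝ, ← add_smul, sub_add_cancel]
  calc ‖exp (t • a)‖ ≤ ‖exp ((t - m) • a)‖ * ‖exp a ^ m‖ := hsplit ▸ norm_mul_le _ _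
    _ ≤ M * (K * Real.exp (-ε) ^ m) := by
        gcongr
        · exact hM _ ⟨by linarith, by linarith⟩
        · exact hK m
    _ = M * K * Real.exp (-ε * m) := by rw [← Real.exp_nat_mul]; ring_nf
    _ ≤ (M * K + 1) * (Real.exp ε * Real.exp (-ε * t)) := by
        rw [← Real.exp_add]
        gcongr
        · linarith
        · nlinarith
    _ = (M * K + 1) * Real.exp ε * Real.exp (-ε * t) := by ring

end spectrum

namespace Matrix

variable {ι : Type*} [Fintype ι] [DecidableEq ι]

theorem mem_spectrum_iff_det_eq_zero {K : Type*} [Field K] {B : Matrix ι ι K} {μ : K} :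
    μ ∈ spectrum K B ↔ (μ • 1 - B).det = 0 := by
  rw [mem_spectrum_iff_isRoot_charpoly, Polynomial.IsRoot, eval_charpoly, scalar_apply,
    smul_one_eq_diagonal]

theorem mem_spectrum_map_iff {R K : Type*} [CommRing R] [Field K] [Algebra K R]
    (φ : R →ₐ[K] K) (M : Matrix ι ι R) {μ : K} :
    μ ∈ spectrum K (M.map φ) ↔ φ (μ • 1 - M).det = 0 := by
  rw [mem_spectrum_iff_det_eq_zero, AlgHom.map_det, map_sub, map_smul, map_one,
    AlgHom.mapMatrix_apply]

variable {R : Type*} [NormedCommRing R] [NormedAlgebra ℂ R] [CompleteSpace R]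

theorem mem_spectrum_iff_exists_mem_spectrum_map {M : Matrix ι ι R} {μ : ℂ} :
    μ ∈ spectrum ℂ M ↔ ∃ φ : R →ₐ[ℂ] ℂ, μ ∈ spectrum ℂ (M.map φ) := by
  constructor
  · intro hμ
    rw [spectrum.mem_iff, Algebra.algebraMap_eq_smul_one, isUnit_iff_isUnit_det] at hμ
    obtain ⟨ψ, hψ⟩ := WeakDual.CharacterSpace.exists_apply_eq_zero hμ
    exact ⟨WeakDual.CharacterSpace.equivAlgHom ψ, (mem_spectrum_map_iff _ M).2 hψ⟩
  · rintro ⟨φ, hφ⟩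
    exact AlgHom.spectrum_apply_subset φ.mapMatrix M hφ

theorem map_exp (φ : R →ₐ[ℂ] ℂ) (M : Matrix ι ι R) : (exp M).map φ = exp (M.map φ) :=
  let _ : NormedAlgebra ℚ R := .restrictScalars ℚ ℂ R
  NormedSpace.map_exp φ.mapMatrix (continuous_id.matrix_map (map_continuous φ)) M

theorem exp_mulVec_of_mulVec_eq_smul {B : Matrix ι ι ℂ} {v : ι → ℂ} {μ : ℂ}
    (h : B *ᵥ v = μ • v) : exp B *ᵥ v = Complex.exp μ • v := by
  have hpow (k : ℕ) : (B ^ k) *ᵥ v = μ ^ k • v := by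
    induction k with
    | zero => simp
    | succ k ih => rw [pow_succ, ← mulVec_mulVec, h, mulVec_smul, ih, smul_smul, pow_succ']
  have hB := (exp_series_hasSum_exp' (𝕂 := ℂ) B).map (mulVec.addMonoidHomLeft v)
    (continuous_id.matrix_mulVec continuous_const)
  have hμ := (exp_series_hasSum_exp' (𝕂 := ℂ) μ).smul_const v
  rw [Complex.exp_eq_exp_ℂ]
  refine hB.unique (hμ.congr_fun fun k => ?_)
  show ((k.factorial : ℂ)⁻¹ • B ^ k) *ᵥ v = _
  rw [smul_mulVec, hpow, smul_smul, smul_eq_mul]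

theorem exists_eq_exp_of_mem_spectrum_exp {B : Matrix ι ι ℂ} {z : ℂ}
    (hz : z ∈ spectrum ℂ (exp B)) : ∃ μ ∈ spectrum ℂ B, z = Complex.exp μ := by
  rw [← spectrum_toLin', ← hasEigenvalue_iff_mem_spectrum] at hz
  have hmaps : Set.MapsTo (toLin' B) (eigenspace (toLin' (exp B)) z)
      (eigenspace (toLin' (exp B)) z) :=
    mapsTo_genEigenspace_of_comm (((Commute.refl B).exp_left).map toLinAlgEquiv') z 1
  have : Nontrivial (eigenspace (toLin' (exp B)) z) := Submodule.nontrivial_iff_ne_bot.2 hz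
  obtain ⟨μ, hμ⟩ := exists_eigenvalue ((toLin' B).restrict hmaps)
  obtain ⟨⟨w, hwz⟩, hw⟩ := hμ.exists_hasEigenvector
  have hBw : B *ᵥ w = μ • w := congrArg Subtype.val hw.apply_eq_smul
  have hw0 : w ≠ 0 := fun h => hw.2 (Subtype.ext h)
  refine ⟨μ, ?_, ?_⟩
  · rw [← spectrum_toLin']
    exact (hasEigenvalue_of_hasEigenvector ⟨mem_eigenspace_iff.2 hBw, hw0⟩).mem_spectrum
  · have hexp : exp B *ᵥ w = z • w := mem_eigenspace_iff.1 hwz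
    rw [exp_mulVec_of_mulVec_eq_smul hBw] at hexp
    exact (smul_left_injective ℂ hw0 hexp).symm

end Matrix

theorem exp_stable_iff_pointwise_spectra_in_left_half_plane_general
    {R : Type*} [NormedCommRing R] [NormedAlgebra ℂ R] [CompleteSpace R]
    {n : ℕ} (A : Matrix (Fin n) (Fin n) R) :
    (∃ C > (0 : ℝ), ∃ ε > (0 : ℝ), ∀ t : ℝ, 0 ≤ t →
        ‖NormedSpace.exp (t • A)‖ ≤ C * Real.exp (-ε * t)) ↔
      ∃ δ > (0 : ℝ), ∀ (φ : R →ₐ[ℂ] ℂ) (μ : ℂ),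
        Matrix.det (μ • (1 : Matrix (Fin n) (Fin n) ℂ) - A.map φ) = 0 → μ.re ≤ -δ := by
  simp_rw [← Matrix.mem_spectrum_iff_det_eq_zero]
  constructor
  · rintro ⟨C, -, ε, hε, hdecay⟩
    exact ⟨ε, hε, fun φ μ hμ => spectrum.re_le_of_norm_exp_smul_le hdecay
      (Matrix.mem_spectrum_iff_exists_mem_spectrum_map.2 ⟨φ, hμ⟩)⟩
  · rintro ⟨δ, hδ, hre⟩
    have hexp : ∀ z ∈ spectrum ℂ (exp A), ‖z‖ ≤ Real.exp (-δ) := by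
      intro z hz
      obtain ⟨φ, hφ⟩ := Matrix.mem_spectrum_iff_exists_mem_spectrum_map.1 hz
      rw [Matrix.map_exp] at hφ
      obtain ⟨μ, hμ, rfl⟩ := Matrix.exists_eq_exp_of_mem_spectrum_exp hφ
      rw [Complex.norm_exp]
      exact Real.exp_le_exp.2 (hre φ μ hμ)
    have hρ : spectralRadius ℂ (exp A) < ENNReal.ofReal (Real.exp (-(δ / 2))) :=
      (spectrum.spectralRadius_le_ofReal_of_forall_norm_le hexp).trans_lt <|
        (ENNReal.ofReal_lt_ofReal_iff (Real.exp_pos _)).2 (Real.exp_lt_exp.2 (by linarith))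
    obtain ⟨C, hC, hdecay⟩ :=
      spectrum.exists_norm_exp_smul_le_of_spectralRadius_exp_lt (by positivity) hρ
    exact ⟨C, hC, δ / 2, by positivity, hdecay⟩

/-- Let `R` be a commutative unital complex semisimple Banach algebra and
`A ∈ R^{n×n}` (with the operator norm induced by the action on `Rⁿ` with the
max norm, i.e. the `L∞`-operator norm). Then `A` is exponentially stable,
i.e. `‖e^{tA}‖ ≤ C e^{−εt}` for all `t ≥ 0` and some `C, ε > 0`, iff
`sup {Re λ : λ eigenvalue of Â(φ), φ ∈ M(R)} < 0`. -/
theorem exp_stable_iff_pointwise_spectra_in_left_half_plane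
    {R : Type*} [NormedCommRing R] [NormedAlgebra ℂ R] [CompleteSpace R]
    (hss : ∀ x : R, (∀ φ : R →ₐ[ℂ] ℂ, φ x = 0) → x = 0)
    {n : ℕ} (A : Matrix (Fin n) (Fin n) R) :
    (∃ C > (0 : ℝ), ∃ ε > (0 : ℝ), ∀ t : ℝ, 0 ≤ t →
        ‖NormedSpace.exp (t • A)‖ ≤ C * Real.exp (-ε * t)) ↔
      ∃ δ > (0 : ℝ), ∀ (φ : R →ₐ[ℂ] ℂ) (μ : ℂ),
        Matrix.det (μ • (1 : Matrix (Fin n) (Fin n) ℂ) - A.map φ) = 0 → μ.re ≤ -δ :=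
  exp_stable_iff_pointwise_spectra_in_left_half_plane_general A
end
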